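/- (Another expression of the optimistic general formulas.) For any general source X, any R ≥ 0, and any ε, δ ∈ [0,1) satisfying ε + δ < 1, it holds that G*_{ε,δ}(X) = H̄*_{ε+δ}(X) and G*_{ε,δ}(R|X) = H̄*_{ε+δ}(R|X). -/

import Mathlib

open Filter MeasureTheory

namespace NY

/-- A probability distribution on a set, given by its point mass function. -/
structure Dist (α : Type*) where
  p : α → ℝ
  nonneg : ∀ x, 0 ≤ p x
  hasSum : HasSum p 1

/-- The probability of a set under a distribution. -/
noncomputable def Dist.pr {α : Type*} (P : Dist α) (A : Set α) : ℝ := ∑' x : A, P.p x.1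

/-- 𝒰* : nonempty finite strings over the code alphabet 𝒰 = {1,…,K}. -/
abbrev Word (K : ℕ) := {u : List (Fin K) // u ≠ []}

/-- Length of a string, as a real number. -/
noncomputable def wlen {K : ℕ} (u : Word K) : ℝ := u.1.length

/-- Error probability of a variable-length code (φ, ψ). -/
noncomputable def errP {α : Type*} {K : ℕ} (P : Dist α) (φ : α → Word K) (ψ : Word K → α) : ℝ :=
  P.pr {x | ψ (φ x) ≠ x}

/-- Overflow probability of an encoder φ with threshold η. -/
noncomputable def ovP {α : Type*} {K : ℕ} (P : Dist α) (φ : α → Word K) (η : ℝ) : ℝ :=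
  P.pr {x | wlen (φ x) > η}

/-- A general source: for each blocklength n, a distribution on 𝒳^n. -/
abbrev Source (𝒳 : Type*) := (n : ℕ) → Dist (Fin n → 𝒳)

/-- The limit as ν ↓ 0 of a function g which is nonincreasing in ν
(the limit exists by monotonicity and equals the supremum over ν > 0). -/
noncomputable def limNu (g : ℝ → ℝ) : ℝ := sSup (g '' Set.Ioi (0 : ℝ))

variable {𝒳 : Type*}

/-- A rate R ≥ 0 is (ε,δ)-achievable. -/
def FirstAch (K : ℕ) (X : Source 𝒳) (ε δ R : ℝ) : Prop :=
  0 ≤ R ∧ ∃ (φ : ∀ n, (Fin n → 𝒳) → Word K) (ψ : ∀ n, Word K → (Fin n → 𝒳)),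
    limsup (fun n => errP (X n) (φ n) (ψ n)) atTop ≤ ε ∧
    limsup (fun n => ovP (X n) (φ n) ((n : ℝ) * R)) atTop ≤ δ

/-- The first-order (ε,δ)-optimum threshold R(ε,δ|X). -/
noncomputable def Ropt (K : ℕ) (X : Source 𝒳) (ε δ : ℝ) : ℝ :=
  sInf {R | FirstAch K X ε δ R}

/-- L is (ε,δ,R)-achievable (second order). -/
def SecondAch (K : ℕ) (X : Source 𝒳) (ε δ R L : ℝ) : Prop :=
  ∃ (φ : ∀ n, (Fin n → 𝒳) → Word K) (ψ : ∀ n, Word K → (Fin n → 𝒳)),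
    limsup (fun n => errP (X n) (φ n) (ψ n)) atTop ≤ ε ∧
    limsup (fun n => ovP (X n) (φ n) ((n : ℝ) * R + Real.sqrt (n : ℝ) * L)) atTop ≤ δ

/-- The second-order (ε,δ,R)-optimum threshold L(ε,δ,R|X). -/
noncomputable def Lopt (K : ℕ) (X : Source 𝒳) (ε δ R : ℝ) : ℝ :=
  sInf {L | SecondAch K X ε δ R L}

/-- A rate R ≥ 0 is optimistically (ε,δ)-achievable. -/
def OptFirstAch (K : ℕ) (X : Source 𝒳) (ε δ R : ℝ) : Prop :=
  0 ≤ R ∧ ∃ (φ : ∀ n, (Fin n → 𝒳) → Word K) (ψ : ∀ n, Word K → (Fin n → 𝒳)),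
    ∀ γ > (0 : ℝ), ∃ ns : ℕ → ℕ, StrictMono ns ∧ ∀ i,
      errP (X (ns i)) (φ (ns i)) (ψ (ns i)) ≤ ε + γ ∧
      ovP (X (ns i)) (φ (ns i)) ((ns i : ℝ) * R) ≤ δ + γ

/-- The optimistic first-order (ε,δ)-optimum threshold R*(ε,δ|X). -/
noncomputable def RoptStar (K : ℕ) (X : Source 𝒳) (ε δ : ℝ) : ℝ :=
  sInf {R | OptFirstAch K X ε δ R}

/-- L is optimistically (ε,δ,R)-achievable. -/
def OptSecondAch (K : ℕ) (X : Source 𝒳) (ε δ R L : ℝ) : Prop :=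
  ∃ (φ : ∀ n, (Fin n → 𝒳) → Word K) (ψ : ∀ n, Word K → (Fin n → 𝒳)),
    ∀ γ > (0 : ℝ), ∃ ns : ℕ → ℕ, StrictMono ns ∧ ∀ i,
      errP (X (ns i)) (φ (ns i)) (ψ (ns i)) ≤ ε + γ ∧
      ovP (X (ns i)) (φ (ns i)) ((ns i : ℝ) * R + Real.sqrt (ns i : ℝ) * L) ≤ δ + γ

/-- The optimistic second-order (ε,δ,R)-optimum threshold L*(ε,δ,R|X). -/
noncomputable def LoptStar (K : ℕ) (X : Source 𝒳) (ε δ R : ℝ) : ℝ :=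
  sInf {L | OptSecondAch K X ε δ R L}

/-- A rate R ≥ 0 is type I (ε,δ)-achievable. -/
def TypeIAch (K : ℕ) (X : Source 𝒳) (ε δ R : ℝ) : Prop :=
  0 ≤ R ∧ ∃ (φ : ∀ n, (Fin n → 𝒳) → Word K) (ψ : ∀ n, Word K → (Fin n → 𝒳)),
    limsup (fun n => errP (X n) (φ n) (ψ n)) atTop ≤ ε ∧
    liminf (fun n => ovP (X n) (φ n) ((n : ℝ) * R)) atTop ≤ δ

/-- R†(ε,δ|X). -/
noncomputable def Rdagger (K : ℕ) (X : Source 𝒳) (ε δ : ℝ) : ℝ :=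
  sInf {R | TypeIAch K X ε δ R}

/-- A rate R ≥ 0 is type II (ε,δ)-achievable. -/
def TypeIIAch (K : ℕ) (X : Source 𝒳) (ε δ R : ℝ) : Prop :=
  0 ≤ R ∧ ∃ (φ : ∀ n, (Fin n → 𝒳) → Word K) (ψ : ∀ n, Word K → (Fin n → 𝒳)),
    liminf (fun n => errP (X n) (φ n) (ψ n)) atTop ≤ ε ∧
    limsup (fun n => ovP (X n) (φ n) ((n : ℝ) * R)) atTop ≤ δ

/-- R‡(ε,δ|X). -/
noncomputable def Rddagger (K : ℕ) (X : Source 𝒳) (ε δ : ℝ) : ℝ :=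
  sInf {R | TypeIIAch K X ε δ R}

/-- H̄_γ(X) := inf{ R : limsup_n Pr{ (1/n) log(1/P_{X^n}(X^n)) > R } ≤ γ }. -/
noncomputable def Hbar (K : ℕ) (X : Source 𝒳) (γ : ℝ) : ℝ :=
  sInf {R | limsup (fun n =>
    (X n).pr {x | Real.logb (K : ℝ) (1 / (X n).p x) / (n : ℝ) > R}) atTop ≤ γ}

/-- H̄*_γ(X) (optimistic version, with liminf). -/
noncomputable def HbarStar (K : ℕ) (X : Source 𝒳) (γ : ℝ) : ℝ :=
  sInf {R | liminf (fun n =>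
    (X n).pr {x | Real.logb (K : ℝ) (1 / (X n).p x) / (n : ℝ) > R}) atTop ≤ γ}

/-- H̄_γ(R|X) := inf{ L : limsup_n Pr{ (1/n) log(1/P_{X^n}(X^n)) > R + L/√n } ≤ γ }. -/
noncomputable def Hbar2 (K : ℕ) (X : Source 𝒳) (γ R : ℝ) : ℝ :=
  sInf {L | limsup (fun n =>
    (X n).pr {x | Real.logb (K : ℝ) (1 / (X n).p x) / (n : ℝ)
      > R + L / Real.sqrt (n : ℝ)}) atTop ≤ γ}

/-- H̄*_γ(R|X) (optimistic version, with liminf). -/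
noncomputable def Hbar2Star (K : ℕ) (X : Source 𝒳) (γ R : ℝ) : ℝ :=
  sInf {L | liminf (fun n =>
    (X n).pr {x | Real.logb (K : ℝ) (1 / (X n).p x) / (n : ℝ)
      > R + L / Real.sqrt (n : ℝ)}) atTop ≤ γ}

/-- F(ε,R) := limsup_n inf_{A : Pr(A) ≥ 1−ε} Pr{ −(1/n) log P_{X^n}(X^n) ≥ R, X^n ∈ A }. -/
noncomputable def Fspec (K : ℕ) (X : Source 𝒳) (ε R : ℝ) : ℝ :=
  limsup (fun n =>
    sInf ((fun A : Set (Fin n → 𝒳) =>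
        (X n).pr (A ∩ {x | -Real.logb (K : ℝ) ((X n).p x) / (n : ℝ) ≥ R})) ''
      {A | (X n).pr A ≥ 1 - ε})) atTop

/-- H̃_{ε,δ}(X) := inf{ R : F(ε,R) ≤ δ }. -/
noncomputable def Htilde (K : ℕ) (X : Source 𝒳) (ε δ : ℝ) : ℝ :=
  sInf {R | Fspec K X ε R ≤ δ}

/-- G_{ε,δ}(X). -/
noncomputable def Gfirst (K : ℕ) (X : Source 𝒳) (ε δ : ℝ) : ℝ :=
  sInf {R | limNu (fun ν => limsup (fun n =>
    sInf ((fun A : Set (Fin n → 𝒳) =>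
        (X n).pr (A ∩ {x | -Real.logb (K : ℝ) ((X n).p x / (X n).pr A) / (n : ℝ) ≥ R})) ''
      {A | (X n).pr A ≥ 1 - ε - ν})) atTop) ≤ δ}

/-- G*_{ε,δ}(X) (optimistic version, with liminf). -/
noncomputable def GfirstStar (K : ℕ) (X : Source 𝒳) (ε δ : ℝ) : ℝ :=
  sInf {R | limNu (fun ν => liminf (fun n =>
    sInf ((fun A : Set (Fin n → 𝒳) =>
        (X n).pr (A ∩ {x | -Real.logb (K : ℝ) ((X n).p x / (X n).pr A) / (n : ℝ) ≥ R})) ''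
      {A | (X n).pr A ≥ 1 - ε - ν})) atTop) ≤ δ}

/-- G_{ε,δ}(R|X). -/
noncomputable def Gsecond (K : ℕ) (X : Source 𝒳) (ε δ R : ℝ) : ℝ :=
  sInf {L | limNu (fun ν => limsup (fun n =>
    sInf ((fun A : Set (Fin n → 𝒳) =>
        (X n).pr (A ∩ {x | -Real.logb (K : ℝ) ((X n).p x / (X n).pr A) / (n : ℝ)
          ≥ R + L / Real.sqrt (n : ℝ)})) ''
      {A | (X n).pr A ≥ 1 - ε - ν})) atTop) ≤ δ}

/-- G*_{ε,δ}(R|X) (optimistic version, with liminf). -/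
noncomputable def GsecondStar (K : ℕ) (X : Source 𝒳) (ε δ R : ℝ) : ℝ :=
  sInf {L | limNu (fun ν => liminf (fun n =>
    sInf ((fun A : Set (Fin n → 𝒳) =>
        (X n).pr (A ∩ {x | -Real.logb (K : ℝ) ((X n).p x / (X n).pr A) / (n : ℝ)
          ≥ R + L / Real.sqrt (n : ℝ)})) ''
      {A | (X n).pr A ≥ 1 - ε - ν})) atTop) ≤ δ}

/-- A rate R is optimistically ε-achievable by fixed-length codes. -/
def FixAchR (K : ℕ) (X : Source 𝒳) (ε R : ℝ) : Prop :=
  ∃ (M : ℕ → ℕ) (φ : ∀ n, (Fin n → 𝒳) → Fin (M n)) (ψ : ∀ n, Fin (M n) → (Fin n → 𝒳)),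
    ∀ γ > (0 : ℝ), ∃ ns : ℕ → ℕ, StrictMono ns ∧ ∀ i,
      (X (ns i)).pr {x | ψ (ns i) (φ (ns i) x) ≠ x} ≤ ε + γ ∧
      Real.logb (K : ℝ) (M (ns i) : ℝ) / (ns i : ℝ) ≤ R + γ

/-- R^f(ε|X). -/
noncomputable def Rfix (K : ℕ) (X : Source 𝒳) (ε : ℝ) : ℝ :=
  sInf {R | FixAchR K X ε R}

/-- A real L is optimistically (ε,R)-achievable by fixed-length codes. -/
def FixAchL (K : ℕ) (X : Source 𝒳) (ε R L : ℝ) : Prop :=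
  ∃ (M : ℕ → ℕ) (φ : ∀ n, (Fin n → 𝒳) → Fin (M n)) (ψ : ∀ n, Fin (M n) → (Fin n → 𝒳)),
    ∀ γ > (0 : ℝ), ∃ ns : ℕ → ℕ, StrictMono ns ∧ ∀ i,
      (X (ns i)).pr {x | ψ (ns i) (φ (ns i) x) ≠ x} ≤ ε + γ ∧
      Real.logb (K : ℝ) ((M (ns i) : ℝ) / (K : ℝ) ^ ((ns i : ℝ) * R)) / Real.sqrt (ns i : ℝ)
        ≤ L + γ

/-- L^f(ε,R|X). -/
noncomputable def Lfix (K : ℕ) (X : Source 𝒳) (ε R : ℝ) : ℝ :=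
  sInf {L | FixAchL K X ε R L}


/-!
Both equalities are instances of one statement about a family of thresholds `τ a n` (here `a` and
`R + a / √n`) whose gaps satisfy `n (τ (a + η) n - τ a n) → ∞` for every `η > 0`.

Converse: on a set `A` with `P(A) ≥ 1 - ε - ν` the conditional information `-log (P(x) / P(A))`
falls short of `log (1 / P(x))` by at most the constant `log (1 / (1 - ε - ν))`, which the gap
absorbs; outside `A` there is mass at most `ε + ν`.

Direct part: the points of `{log (1 / P) ≥ n τ'}` are atoms of mass at most `K ^ (-n τ')`, so one
can cut out of this set a subset `C` whose mass lies within `K ^ (-n τ')` below `ε`. The set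
`A = Cᶜ` is admissible, and the mass of large conditional information left in `A` is about `δ`.

Since each side at threshold `a` implies the other at `a + η`, the two infima agree.
-/

open Set

namespace Dist

variable {α : Type*} (P : Dist α)

lemma summable : Summable P.p := P.hasSum.summable

lemma pr_eq_tsum_indicator (A : Set α) : P.pr A = ∑' x, A.indicator P.p x := tsum_subtype A P.p

lemma pr_nonneg (A : Set α) : 0 ≤ P.pr A := tsum_nonneg fun _ => P.nonneg _

lemma pr_le_pr_of_forall_pos {A B : Set α} (h : ∀ x ∈ A, 0 < P.p x → x ∈ B) :
    P.pr A ≤ P.pr B := by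
  rw [P.pr_eq_tsum_indicator, P.pr_eq_tsum_indicator]
  refine (P.summable.indicator A).tsum_le_tsum (fun x => ?_) (P.summable.indicator B)
  have hB : 0 ≤ B.indicator P.p x := indicator_nonneg (fun y _ => P.nonneg y) x
  by_cases hxA : x ∈ A
  · rcases (P.nonneg x).eq_or_lt with hx0 | hpos
    · rwa [indicator_of_mem hxA, ← hx0]
    · rw [indicator_of_mem hxA, indicator_of_mem (h x hxA hpos)]
  · rwa [indicator_of_notMem hxA]

lemma pr_mono {A B : Set α} (h : A ⊆ B) : P.pr A ≤ P.pr B :=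
  P.pr_le_pr_of_forall_pos fun _ hx _ => h hx

lemma pr_empty : P.pr ∅ = 0 := tsum_empty

lemma pr_univ : P.pr univ = 1 := by
  rw [Dist.pr, tsum_univ]
  exact P.hasSum.tsum_eq

lemma pr_le_one (A : Set α) : P.pr A ≤ 1 :=
  P.pr_univ ▸ P.pr_mono (subset_univ A)

lemma pr_singleton (x : α) : P.pr {x} = P.p x := tsum_singleton x P.p

lemma p_le_one (x : α) : P.p x ≤ 1 :=
  P.pr_singleton x ▸ P.pr_le_one {x}

lemma pr_union {A B : Set α} (h : Disjoint A B) : P.pr (A ∪ B) = P.pr A + P.pr B := by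
  rw [P.pr_eq_tsum_indicator, P.pr_eq_tsum_indicator, P.pr_eq_tsum_indicator,
    indicator_union_of_disjoint h]
  exact (P.summable.indicator A).tsum_add (P.summable.indicator B)

lemma pr_compl (A : Set α) : P.pr Aᶜ = 1 - P.pr A := by
  have h := P.pr_union (disjoint_compl_right (a := A))
  rw [union_compl_self, P.pr_univ] at h
  linarith

lemma pr_diff {C E : Set α} (h : C ⊆ E) : P.pr (E \ C) = P.pr E - P.pr C := by
  have h' := P.pr_union (disjoint_sdiff_right : Disjoint C (E \ C))
  rw [union_sdiff_cancel h] at h'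
  linarith

lemma pr_le_pr_inter_add_pr_compl (T A : Set α) : P.pr T ≤ P.pr (T ∩ A) + P.pr Aᶜ := by
  calc P.pr T = P.pr (T ∩ A) + P.pr (T \ A) := by
        rw [← P.pr_union disjoint_sdiff_inter.symm, inter_union_sdiff]
    _ ≤ P.pr (T ∩ A) + P.pr Aᶜ := by gcongr; exact P.pr_mono (sdiff_subset_compl T A)

lemma exists_lt_pr_inter_of_lt_pr (f : α → ℕ) {E : Set α} {t : ℝ} (htE : t < P.pr E) :
    ∃ k, t < P.pr (E ∩ {x | f x < k}) := by
  by_contra! h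
  refine htE.not_ge ?_
  rw [P.pr_eq_tsum_indicator]
  refine (P.summable.indicator E).tsum_le_of_sum_le fun F => ?_
  calc ∑ x ∈ F, E.indicator P.p x = ∑ x ∈ F, (E ∩ {x | f x < F.sup f + 1}).indicator P.p x :=
        Finset.sum_congr rfl fun x hx => by
          by_cases hxE : x ∈ E
          · rw [indicator_of_mem hxE, indicator_of_mem
              (show x ∈ E ∩ {x | f x < F.sup f + 1} from ⟨hxE, Nat.lt_succ_of_le (F.le_sup hx)⟩)]
          · rw [indicator_of_notMem hxE, indicator_of_notMem fun h => hxE h.1]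
    _ ≤ P.pr (E ∩ {x | f x < F.sup f + 1}) := by
        rw [P.pr_eq_tsum_indicator]
        exact (P.summable.indicator _).sum_le_tsum F fun x _ =>
          indicator_nonneg (fun y _ => P.nonneg y) x
    _ ≤ t := h _

lemma pr_inter_lt_succ_le {f : α → ℕ} (hf : f.Injective) {E : Set α} {a : ℝ} (ha0 : 0 ≤ a)
    (ha : ∀ x ∈ E, P.p x ≤ a) (k : ℕ) :
    P.pr (E ∩ {x | f x < k + 1}) ≤ P.pr (E ∩ {x | f x < k}) + a := by
  have hsplit : E ∩ {x | f x < k + 1} = E ∩ {x | f x < k} ∪ E ∩ {x | f x = k} := by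
    ext x
    simp only [mem_inter_iff, mem_ofPred_eq, mem_union, Nat.lt_succ_iff_lt_or_eq, and_or_left]
  have hdisj : Disjoint (E ∩ {x | f x < k}) (E ∩ {x | f x = k}) :=
    disjoint_left.2 fun x hx hx' => (hx.2.ne hx'.2).elim
  have hsub : (E ∩ {x | f x = k}).Subsingleton := fun x hx y hy => hf (hx.2.trans hy.2.symm)
  rw [hsplit, P.pr_union hdisj]
  gcongr
  rcases hsub.eq_empty_or_singleton with h | ⟨x, h⟩
  · rwa [h, P.pr_empty]
  · rw [h, P.pr_singleton]
    exact ha x (h.symm ▸ mem_singleton x).1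

lemma exists_subset_pr_mem_Icc [Countable α] {E : Set α} {a t : ℝ} (ha : ∀ x ∈ E, P.p x ≤ a)
    (ht : 0 ≤ t) (htE : t < P.pr E) : ∃ C ⊆ E, t - a ≤ P.pr C ∧ P.pr C ≤ t := by
  obtain ⟨f, hf⟩ := Countable.exists_injective_nat α
  have hex := P.exists_lt_pr_inter_of_lt_pr f htE
  obtain ⟨k, hk⟩ : ∃ k, Nat.find hex = k + 1 := Nat.exists_eq_succ_of_ne_zero fun h0 => by
    have := h0 ▸ Nat.find_spec hex
    simp only [not_lt_zero, ofPred_false, inter_empty, P.pr_empty] at this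
    linarith
  obtain ⟨y, hyE⟩ : E.Nonempty := nonempty_iff_ne_empty.2 fun h => by
    rw [h, P.pr_empty] at htE
    linarith
  have hmin : P.pr (E ∩ {x | f x < k}) ≤ t := not_lt.1 (Nat.find_min hex (by omega))
  have hstep := P.pr_inter_lt_succ_le hf ((P.nonneg y).trans (ha y hyE)) ha k
  have hnext : t < P.pr (E ∩ {x | f x < k + 1}) := hk ▸ Nat.find_spec hex
  exact ⟨_, inter_subset_left, by linarith, hmin⟩

/-- With `s = n`, `infoTail` and `minCondInfoTail` are the quantities inside `H̄*` and `G*`;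
`P.p x / P.pr A` is the probability of `x` conditioned on `A`. -/
noncomputable def infoTail (b s t : ℝ) : ℝ := P.pr {x | Real.logb b (1 / P.p x) / s > t}

noncomputable def minCondInfoTail (b r s t : ℝ) : ℝ :=
  sInf ((fun A : Set α => P.pr (A ∩ {x | -Real.logb b (P.p x / P.pr A) / s ≥ t})) ''
    {A | P.pr A ≥ r})

variable {b : ℝ}

lemma infoTail_mem_Icc (s t : ℝ) : P.infoTail b s t ∈ Icc 0 1 := ⟨P.pr_nonneg _, P.pr_le_one _⟩

lemma minCondInfoTail_le {r s t : ℝ} {A : Set α} (hA : r ≤ P.pr A) :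
    P.minCondInfoTail b r s t ≤ P.pr (A ∩ {x | -Real.logb b (P.p x / P.pr A) / s ≥ t}) :=
  csInf_le ⟨0, by rintro _ ⟨B, -, rfl⟩; exact P.pr_nonneg _⟩ (mem_image_of_mem _ hA)

lemma le_minCondInfoTail {r s t c : ℝ} (hr : r ≤ 1)
    (h : ∀ A, r ≤ P.pr A → c ≤ P.pr (A ∩ {x | -Real.logb b (P.p x / P.pr A) / s ≥ t})) :
    c ≤ P.minCondInfoTail b r s t :=
  le_csInf ⟨_, mem_image_of_mem _ (show r ≤ P.pr univ from P.pr_univ ▸ hr)⟩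
    (by rintro _ ⟨A, hA, rfl⟩; exact h A hA)

lemma minCondInfoTail_mem_Icc {r : ℝ} (hr : r ≤ 1) (s t : ℝ) :
    P.minCondInfoTail b r s t ∈ Icc 0 1 :=
  ⟨P.le_minCondInfoTail hr fun _ _ => P.pr_nonneg _,
    (P.minCondInfoTail_le (P.pr_univ.symm ▸ hr)).trans (P.pr_le_one _)⟩

lemma nonneg_of_infoTail_lt_one (hb : 1 < b) {s t : ℝ} (hs : 0 ≤ s) (h : P.infoTail b s t < 1) :
    0 ≤ t := by
  by_contra! ht
  refine h.ne ?_
  rw [infoTail, show {x | Real.logb b (1 / P.p x) / s > t} = univ from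
    eq_univ_of_forall fun x => ?_, P.pr_univ]
  have : Real.logb b (P.p x) ≤ 0 := Real.logb_nonpos hb (P.nonneg x) (P.p_le_one x)
  rw [mem_ofPred_eq, one_div, Real.logb_inv]
  exact ht.trans_le (div_nonneg (by linarith) hs)

lemma neg_logb_div_pr_eq {x : α} {A : Set α} (hx : x ∈ A) (hpos : 0 < P.p x) :
    -Real.logb b (P.p x / P.pr A) = Real.logb b (1 / P.p x) + Real.logb b (P.pr A) := by
  have hA : 0 < P.pr A := hpos.trans_le (P.pr_singleton x ▸ P.pr_mono (singleton_subset_iff.2 hx))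
  rw [Real.logb_div hpos.ne' hA.ne', one_div, Real.logb_inv]
  ring

lemma minCondInfoTail_le_of_infoTail_le [Countable α] (hb : 1 < b) {r c d s t t' : ℝ}
    (hr : r ≤ 1 - c) (hc : 0 ≤ c) (hd : 0 ≤ d) (hs : 0 < s) (htt' : t < t')
    (hP : P.infoTail b s t ≤ c + d) :
    P.minCondInfoTail b r s t' ≤ d + b ^ (-(s * t')) := by
  set E := {x | t' ≤ Real.logb b (1 / P.p x) / s}
  have hatom : ∀ x ∈ E, P.p x ≤ b ^ (-(s * t')) := by
    intro x hx
    rcases (P.nonneg x).eq_or_lt with hx0 | hpos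
    · rw [← hx0]; positivity
    · rw [← Real.logb_le_iff_le_rpow hb hpos]
      rw [mem_ofPred_eq, le_div_iff₀ hs, one_div, Real.logb_inv] at hx
      linarith
  have hE : P.pr E ≤ c + d := (P.pr_mono fun x hx => htt'.trans_le hx).trans hP
  obtain ⟨C, hCE, hCc, hEC⟩ : ∃ C ⊆ E, P.pr C ≤ c ∧ P.pr E - P.pr C ≤ d + b ^ (-(s * t')) := by
    by_cases hEc : P.pr E ≤ c
    · exact ⟨E, subset_rfl, hEc, by rw [sub_self]; positivity⟩
    · obtain ⟨C, hCE, h1, h2⟩ := P.exists_subset_pr_mem_Icc hatom hc (not_le.1 hEc)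
      exact ⟨C, hCE, h2, by linarith⟩
  calc P.minCondInfoTail b r s t'
      ≤ P.pr (Cᶜ ∩ {x | -Real.logb b (P.p x / P.pr Cᶜ) / s ≥ t'}) :=
        P.minCondInfoTail_le (by rw [P.pr_compl]; linarith)
    _ ≤ P.pr (E \ C) := by
        refine P.pr_le_pr_of_forall_pos fun x ⟨hxC, hx⟩ hpos => ⟨?_, hxC⟩
        have hA : Real.logb b (P.pr Cᶜ) ≤ 0 := Real.logb_nonpos hb (P.pr_nonneg _) (P.pr_le_one _)
        rw [mem_ofPred_eq, P.neg_logb_div_pr_eq hxC hpos] at hx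
        exact hx.trans (div_le_div_of_nonneg_right (by linarith) hs.le)
    _ = P.pr E - P.pr C := P.pr_diff hCE
    _ ≤ d + b ^ (-(s * t')) := hEC

lemma infoTail_sub_le_minCondInfoTail (hb : 1 < b) {r s t t' : ℝ} (hr0 : 0 < r) (hr1 : r ≤ 1)
    (hs : 0 < s) (htt' : -Real.logb b r ≤ s * (t' - t)) :
    P.infoTail b s t' - (1 - r) ≤ P.minCondInfoTail b r s t := by
  refine P.le_minCondInfoTail hr1 fun A hA => ?_
  have hAc : P.pr Aᶜ ≤ 1 - r := by rw [P.pr_compl]; linarith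
  have hT := P.pr_le_pr_inter_add_pr_compl {x | Real.logb b (1 / P.p x) / s > t'} A
  have hincl : P.pr ({x | Real.logb b (1 / P.p x) / s > t'} ∩ A) ≤
      P.pr (A ∩ {x | -Real.logb b (P.p x / P.pr A) / s ≥ t}) := by
    refine P.pr_le_pr_of_forall_pos fun x ⟨hx, hxA⟩ hpos => ⟨hxA, ?_⟩
    have hrA : Real.logb b r ≤ Real.logb b (P.pr A) := Real.logb_le_logb_of_le hb hr0 hA
    rw [mem_ofPred_eq, gt_iff_lt, lt_div_iff₀ hs] at hx
    rw [mem_ofPred_eq, P.neg_logb_div_pr_eq hxA hpos, ge_iff_le, le_div_iff₀ hs]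
    linarith
  rw [infoTail]
  linarith

end Dist

lemma liminf_le_iff_of_mem_Icc {ι : Type*} {l : Filter ι} [l.NeBot] {u : ι → ℝ} {a c : ℝ}
    (hu : ∀ i, u i ∈ Icc a c) {x : ℝ} :
    liminf u l ≤ x ↔ ∀ y > x, ∃ᶠ i in l, u i ≤ y :=
  liminf_le_iff' (isBoundedUnder_of ⟨c, fun i => (hu i).2⟩).isCoboundedUnder_ge
    (isBoundedUnder_of ⟨a, fun i => (hu i).1⟩)

lemma limNu_le_iff {g : ℝ → ℝ} (hg : BddAbove (g '' Ioi 0)) {δ : ℝ} :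
    limNu g ≤ δ ↔ ∀ ν > 0, g ν ≤ δ := by
  rw [limNu, csSup_le_iff hg (nonempty_Ioi.image g), forall_mem_image]
  rfl

lemma sInf_le_sInf_of_forall_add_mem {S T : Set ℝ} (hST : ∀ x ∈ S, ∀ η > 0, x + η ∈ T)
    (hTS : ∀ x ∈ T, ∀ η > 0, x + η ∈ S) : sInf T ≤ sInf S := by
  rcases S.eq_empty_or_nonempty with rfl | ⟨x, hx⟩
  · rw [show T = ∅ from eq_empty_of_forall_notMem fun x hx => hTS x hx 1 one_pos]
  by_cases hT : BddBelow T
  · exact le_csInf ⟨x, hx⟩ fun y hy =>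
      le_of_forall_pos_le_add fun η hη => csInf_le hT (hST y hy η hη)
  · have hS : ¬ BddBelow S := fun ⟨c, hc⟩ =>
      hT ⟨c - 1, fun y hy => by linarith [hc (hTS y hy 1 one_pos)]⟩
    rw [Real.sInf_of_not_bddBelow hT, Real.sInf_of_not_bddBelow hS]

lemma sInf_eq_sInf_of_forall_add_mem {S T : Set ℝ} (hST : ∀ x ∈ S, ∀ η > 0, x + η ∈ T)
    (hTS : ∀ x ∈ T, ∀ η > 0, x + η ∈ S) : sInf S = sInf T :=
  le_antisymm (sInf_le_sInf_of_forall_add_mem hTS hST) (sInf_le_sInf_of_forall_add_mem hST hTS)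

section Source

variable {𝒳 : Type*} (X : Source 𝒳) {b ε δ : ℝ} {τ τ' : ℕ → ℝ}

lemma liminf_minCondInfoTail_le [Countable 𝒳] (hb : 1 < b) (hε : 0 ≤ ε) (hδ : 0 ≤ δ)
    (hεδ : ε + δ < 1) {r : ℝ} (hr : r ≤ 1 - ε)
    (hτ : Tendsto (fun n : ℕ => n * (τ' n - τ n)) atTop atTop)
    (hH : liminf (fun n => (X n).infoTail b n (τ n)) atTop ≤ ε + δ) :
    liminf (fun n => (X n).minCondInfoTail b r n (τ' n)) atTop ≤ δ := by
  rw [liminf_le_iff_of_mem_Icc fun n => (X n).infoTail_mem_Icc _ _] at hH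
  rw [liminf_le_iff_of_mem_Icc fun n => (X n).minCondInfoTail_mem_Icc (by linarith) _ _]
  intro y hy
  have hfreq := hH (min (ε + (y + δ) / 2) ((1 + ε + δ) / 2)) (lt_min (by linarith) (by linarith))
  have hsmall : ∀ᶠ n : ℕ in atTop, b ^ (-(n * (τ' n - τ n))) < (y - δ) / 2 :=
    ((tendsto_rpow_atBot_of_base_gt_one b hb).comp (tendsto_neg_atTop_atBot.comp hτ)).eventually
      (gt_mem_nhds (by linarith))
  refine (hfreq.and_eventually ((hsmall.and (hτ.eventually_gt_atTop 0)).and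
    (eventually_gt_atTop 0))).mono fun n ⟨hHn, ⟨hsmall, hgap⟩, hn⟩ => ?_
  have hn : (0 : ℝ) < n := Nat.cast_pos.2 hn
  have hττ' : τ n < τ' n := sub_pos.1 (pos_of_mul_pos_right hgap hn.le)
  have hτ0 : 0 ≤ τ n := (X n).nonneg_of_infoTail_lt_one hb hn.le
    (hHn.trans_lt ((min_le_right _ _).trans_lt (by linarith)))
  calc (X n).minCondInfoTail b r n (τ' n)
      ≤ (y + δ) / 2 + b ^ (-(n * τ' n)) :=
        (X n).minCondInfoTail_le_of_infoTail_le hb hr hε (by linarith) hn hττ'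
          (hHn.trans (min_le_left _ _))
    _ ≤ (y + δ) / 2 + b ^ (-(n * (τ' n - τ n))) := by
        gcongr
        · exact hb.le
        · linarith [mul_nonneg hn.le hτ0, mul_sub (n : ℝ) (τ' n) (τ n)]
    _ ≤ y := by linarith

lemma liminf_infoTail_le (hb : 1 < b) {r : ℝ} (hr0 : 0 < r) (hr1 : r ≤ 1)
    (hτ : Tendsto (fun n : ℕ => n * (τ' n - τ n)) atTop atTop)
    (hG : liminf (fun n => (X n).minCondInfoTail b r n (τ n)) atTop ≤ δ) :
    liminf (fun n => (X n).infoTail b n (τ' n)) atTop ≤ δ + (1 - r) := by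
  rw [liminf_le_iff_of_mem_Icc fun n => (X n).minCondInfoTail_mem_Icc hr1 _ _] at hG
  rw [liminf_le_iff_of_mem_Icc fun n => (X n).infoTail_mem_Icc _ _]
  intro y hy
  refine ((hG (y - (1 - r)) (by linarith)).and_eventually
    ((hτ.eventually_ge_atTop (-Real.logb b r)).and (eventually_gt_atTop 0))).mono
    fun n ⟨hGn, hgap, hn⟩ => ?_
  have := (X n).infoTail_sub_le_minCondInfoTail hb hr0 hr1 (Nat.cast_pos.2 hn) hgap
  linarith

theorem sInf_limNu_minCondInfoTail_eq_sInf_infoTail [Countable 𝒳] (hb : 1 < b) (hε : 0 ≤ ε)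
    (hδ : 0 ≤ δ) (hεδ : ε + δ < 1) (τ : ℝ → ℕ → ℝ)
    (hτ : ∀ a, ∀ η > 0, Tendsto (fun n : ℕ => n * (τ (a + η) n - τ a n)) atTop atTop) :
    sInf {a | limNu (fun ν => liminf (fun n => (X n).minCondInfoTail b (1 - ε - ν) n (τ a n))
      atTop) ≤ δ} = sInf {a | liminf (fun n => (X n).infoTail b n (τ a n)) atTop ≤ ε + δ} := by
  have hbdd : ∀ a, BddAbove ((fun ν => liminf (fun n =>
      (X n).minCondInfoTail b (1 - ε - ν) n (τ a n)) atTop) '' Ioi 0) := by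
    intro a
    refine ⟨1, forall_mem_image.2 fun ν (hν : 0 < ν) => ?_⟩
    have hIcc := fun n =>
      (X n).minCondInfoTail_mem_Icc (b := b) (by linarith : 1 - ε - ν ≤ 1) n (τ a n)
    exact (liminf_le_iff_of_mem_Icc hIcc).2 fun y hy =>
      Frequently.of_forall fun n => (hIcc n).2.trans hy.le
  refine sInf_eq_sInf_of_forall_add_mem (fun a ha η hη => ?_) (fun a ha η hη => ?_)
  · rw [mem_ofPred_eq, limNu_le_iff (hbdd a)] at ha
    rw [mem_ofPred_eq]
    refine le_of_forall_pos_le_add fun γ hγ => ?_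
    have hν : 0 < min γ ((1 - ε) / 2) := lt_min hγ (by linarith)
    have := liminf_infoTail_le X hb (by linarith [min_le_right γ ((1 - ε) / 2)]) (by linarith)
      (hτ a η hη) (ha _ hν)
    linarith [min_le_left γ ((1 - ε) / 2)]
  · rw [mem_ofPred_eq, limNu_le_iff (hbdd _)]
    exact fun ν hν => liminf_minCondInfoTail_le X hb hε hδ hεδ (by linarith) (hτ a η hη) ha

end Source

theorem statement16_general {𝒳 : Type*} [Countable 𝒳] (K : ℕ) (hK : 2 ≤ K) (X : Source 𝒳)
    (R ε δ : ℝ)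
    (hε0 : 0 ≤ ε) (hδ0 : 0 ≤ δ) (hεδ : ε + δ < 1) :
    GfirstStar K X ε δ = HbarStar K X (ε + δ) ∧
    GsecondStar K X ε δ R = Hbar2Star K X (ε + δ) R := by
  have hK1 : (1 : ℝ) < K := by exact_mod_cast hK
  constructor
  · refine sInf_limNu_minCondInfoTail_eq_sInf_infoTail X hK1 hε0 hδ0 hεδ (fun a _ => a)
      fun a η hη => ?_
    simpa using tendsto_natCast_atTop_atTop.atTop_mul_const hη
  · refine sInf_limNu_minCondInfoTail_eq_sInf_infoTail X hK1 hε0 hδ0 hεδ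
      (fun a n => R + a / √n) fun a η hη => ?_
    refine ((Real.tendsto_sqrt_atTop.comp tendsto_natCast_atTop_atTop).const_mul_atTop hη).congr
      fun n => ?_
    simp only [Function.comp_apply]
    rw [add_sub_add_left_eq_sub, ← sub_div, add_sub_cancel_left, mul_div_left_comm, Real.div_sqrt]

/-- G*_{ε,δ}(X) = H̄*_{ε+δ}(X) and G*_{ε,δ}(R|X) = H̄*_{ε+δ}(R|X). -/
theorem statement16 {𝒳 : Type*} [Countable 𝒳] (K : ℕ) (hK : 2 ≤ K) (X : Source 𝒳)
    (R ε δ : ℝ) (hR : 0 ≤ R)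
    (hε0 : 0 ≤ ε) (hε1 : ε < 1) (hδ0 : 0 ≤ δ) (hδ1 : δ < 1) (hεδ : ε + δ < 1) :
    GfirstStar K X ε δ = HbarStar K X (ε + δ) ∧
    GsecondStar K X ε δ R = Hbar2Star K X (ε + δ) R :=
  statement16_general K hK X R ε δ hε0 hδ0 hεδ
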